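/- arXiv:2304.03371 — 5 statements merged into one kernel-verified Lean document; each statement's English description precedes it below -/
import Mathlib

section
/- Every infinite set of natural numbers has a cohesive subset. -/
def Cohesive (C : Set ℕ) : Prop :=
  C.Infinite ∧ ∀ W : Set ℕ, REPred (· ∈ W) → (W ∩ C).Finite ∨ (Wᶜ ∩ C).Finite

/-! Enumerate the c.e. sets as `W 0, W 1, …` (there are only countably many, one per code).
Starting from `X`, let `X (n+1)` be whichever of `W n ∩ X n` and `(W n)ᶜ ∩ X n` is infinite.
Choosing `c n ∈ X n` with `n < c n` gives an infinite set `{c n}` that is almost contained in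
every `X n`, hence almost contained in `W n` or in its complement. -/

open Set

theorem countable_setOf_rePred : {W : Set ℕ | REPred (· ∈ W)}.Countable := by
  refine (countable_range fun c : Nat.Partrec.Code => {m | (c.eval m).Dom}).mono ?_
  intro W hW
  obtain ⟨c, hc⟩ := Nat.Partrec.Code.exists_code.1 hW
  refine ⟨c, ext fun m => ?_⟩
  simp [hc, Part.assert, Encodable.decode]

section Refinement

variable {α : Type*}

noncomputable def splitChain (A : ℕ → Set α) (X : Set α) : ℕ → Set α
  | 0 => X
  | n + 1 =>
    open Classical in
    if (A n ∩ splitChain A X n).Infinite then A n ∩ splitChain A X n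
    else (A n)ᶜ ∩ splitChain A X n

theorem splitChain_infinite (A : ℕ → Set α) {X : Set α} (hX : X.Infinite) (n : ℕ) :
    (splitChain A X n).Infinite := by
  induction n with
  | zero => exact hX
  | succ n ih =>
    by_cases h : (A n ∩ splitChain A X n).Infinite
    · rw [splitChain.eq_2, if_pos h]
      exact h
    · have hcompl : ((A n)ᶜ ∩ splitChain A X n).Infinite := by
        rw [inter_comm, ← sdiff_eq, ← sdiff_inter_self_eq_sdiff]
        exact ih.sdiff (not_infinite.1 h)
      rw [splitChain.eq_2, if_neg h]
      exact hcompl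

theorem splitChain_succ_subset (A : ℕ → Set α) (X : Set α) (n : ℕ) :
    splitChain A X (n + 1) ⊆ splitChain A X n := by
  rw [splitChain.eq_2]
  split_ifs <;> exact inter_subset_right

theorem splitChain_antitone (A : ℕ → Set α) (X : Set α) : Antitone (splitChain A X) :=
  antitone_nat_of_succ_le (splitChain_succ_subset A X)

theorem splitChain_succ_subset_or (A : ℕ → Set α) (X : Set α) (n : ℕ) :
    splitChain A X (n + 1) ⊆ A n ∨ splitChain A X (n + 1) ⊆ (A n)ᶜ := by
  rw [splitChain.eq_2]
  split_ifs
  exacts [Or.inl inter_subset_left, Or.inr inter_subset_left]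

end Refinement

theorem exists_infinite_almost_subset_of_antitone {S : ℕ → Set ℕ} (hS : Antitone S)
    (hinf : ∀ n, (S n).Infinite) : ∃ C ⊆ S 0, C.Infinite ∧ ∀ n, (C \ S n).Finite := by
  choose c hcS hlt using fun n => (hinf n).exists_gt n
  refine ⟨range c, ?_, ?_, fun n => ?_⟩
  · rintro _ ⟨m, rfl⟩
    exact hS (Nat.zero_le m) (hcS m)
  · refine infinite_of_not_bddAbove fun ⟨b, hb⟩ => ?_
    exact (hlt b).not_ge (hb ⟨b, rfl⟩)
  · refine ((finite_Iio n).image c).subset ?_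
    rintro _ ⟨⟨m, rfl⟩, hm⟩
    exact ⟨m, lt_of_not_ge fun hnm => hm (hS hnm (hcS m)), rfl⟩

theorem exists_infinite_subset_finite_inter_or_finite_compl_inter (A : ℕ → Set ℕ) {X : Set ℕ}
    (hX : X.Infinite) :
    ∃ C ⊆ X, C.Infinite ∧ ∀ n, (A n ∩ C).Finite ∨ ((A n)ᶜ ∩ C).Finite := by
  obtain ⟨C, hCX, hC, hfin⟩ := exists_infinite_almost_subset_of_antitone
    (splitChain_antitone A X) (splitChain_infinite A hX)
  refine ⟨C, hCX, hC, fun n => ?_⟩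
  rcases splitChain_succ_subset_or A X n with hsub | hsub
  · exact Or.inr ((hfin (n + 1)).subset fun x hx => ⟨hx.2, fun h => hx.1 (hsub h)⟩)
  · exact Or.inl ((hfin (n + 1)).subset fun x hx => ⟨hx.2, fun h => hsub h hx.1⟩)

theorem exists_cohesive_subset (X : Set ℕ) (hX : X.Infinite) :
    ∃ C : Set ℕ, C ⊆ X ∧ Cohesive C := by
  obtain ⟨A, hA⟩ := countable_iff_exists_subset_range.1 countable_setOf_rePred
  obtain ⟨C, hCX, hC, hsplit⟩ := exists_infinite_subset_finite_inter_or_finite_compl_inter A hX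
  refine ⟨C, hCX, hC, fun W hW => ?_⟩
  obtain ⟨n, rfl⟩ := hA hW
  exact hsplit n
end

section
/- If C is a co-c.e. cohesive set, then for every partial computable function ψ : ℕ → ℕ with C ⊆* dom(ψ), there is a total computable function f : ℕ → ℕ such that C ⊆* {i : ψ(i)↓ = f(i)}. -/
/-!
Merge `ψ` with a partial function defined exactly on the c.e. set `Cᶜ`. The result agrees with `ψ`
on `C` and diverges only on the finite set `C \ dom ψ`, so patching it on that finite (hence
decidable) set gives a total computable function.
-/

theorem Set.Finite.primrecPred_mem {α : Type*} [Primcodable α] {S : Set α} (hS : S.Finite) :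
    PrimrecPred (· ∈ S) :=
  ((PrimrecRel.exists_mem_list Primrec.eq).comp (Primrec.const hS.toFinset.toList)
    Primrec.id).of_eq fun a => by simp

theorem Partrec.exists_computable_mem_of_finite_compl_dom {α σ : Type*} [Primcodable α]
    [Primcodable σ] [Inhabited σ] {k : α →. σ} (hk : Partrec k)
    (hfin : {a | ¬(k a).Dom}.Finite) :
    ∃ f : α → σ, Computable f ∧ ∀ a, (k a).Dom → f a ∈ k a := by
  classical
  have hc : Computable fun a => decide (a ∈ {a | ¬(k a).Dom}) :=
    hfin.primrecPred_mem.computablePred.decide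
  refine ⟨fun a => if h : (k a).Dom then (k a).get h else default, ?_, fun a h => ?_⟩
  · refine (Partrec.cond hc (Computable.const default) hk).of_eq_tot fun a => ?_
    by_cases h : (k a).Dom <;> simp [h, Part.get_mem]
  · simp [h, Part.get_mem]

theorem Partrec.exists_extend_to_compl_of_re_compl {α σ : Type*} [Primcodable α]
    [Primcodable σ] [Inhabited σ] {C : Set α} (hC : REPred (· ∈ Cᶜ)) {ψ : α →. σ}
    (hψ : Partrec ψ) :
    ∃ k : α →. σ, Partrec k ∧ (∀ a ∈ C, ∀ b ∈ k a, b ∈ ψ a) ∧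
      ∀ a, (k a).Dom ↔ (ψ a).Dom ∨ a ∉ C := by
  let g : α →. σ := fun a => (Part.assert (a ∈ Cᶜ) fun _ => Part.some ()).map fun _ => default
  have hg : Partrec g := hC.map ((Computable.const default).comp Computable.fst).to₂
  obtain ⟨k, hk, H⟩ := Partrec.merge' hψ hg
  refine ⟨k, hk, fun a ha b hb => ?_, fun a => by simp [(H a).2, g, Part.assert]⟩
  refine ((H a).1 b hb).resolve_right fun hgb => ?_
  simp only [g, Part.mem_map_iff, Part.mem_assert_iff] at hgb
  obtain ⟨_, ⟨haC, _⟩, _⟩ := hgb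
  exact haC ha

theorem coCE_cohesive_total_representative_general (C : Set ℕ)
    (hcoce : REPred (· ∈ Cᶜ)) (ψ : ℕ →. ℕ) (hψ : Nat.Partrec ψ)
    (hdom : (C \ {i | (ψ i).Dom}).Finite) :
    ∃ f : ℕ → ℕ, Computable f ∧ (C \ {i | f i ∈ ψ i}).Finite := by
  obtain ⟨k, hk, hkψ, hkdom⟩ :=
    Partrec.exists_extend_to_compl_of_re_compl hcoce (Partrec.nat_iff.2 hψ)
  have hdiv : {a | ¬(k a).Dom} ⊆ C \ {i | (ψ i).Dom} := fun a ha => by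
    simp_all
  obtain ⟨f, hf, hfk⟩ := hk.exists_computable_mem_of_finite_compl_dom (hdom.subset hdiv)
  refine ⟨f, hf, hdom.subset fun a ⟨haC, hfa⟩ => ⟨haC, fun hψa => hfa ?_⟩⟩
  exact hkψ a haC _ (hfk a ((hkdom a).2 (Or.inl hψa)))

theorem coCE_cohesive_total_representative (C : Set ℕ) (hC : Cohesive C)
    (hcoce : REPred (· ∈ Cᶜ)) (ψ : ℕ →. ℕ) (hψ : Nat.Partrec ψ)
    (hdom : (C \ {i | (ψ i).Dom}).Finite) :
    ∃ f : ℕ → ℕ, Computable f ∧ (C \ {i | f i ∈ ψ i}).Finite :=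
  coCE_cohesive_total_representative_general C hcoce ψ hψ hdom
end

section
/- Two countable injection structures (A, f) and (B, g) are isomorphic if and only if they have the same number of orbits of size k for every finite k ≥ 1, the same number of orbits of type ω, and the same number of orbits of type Z. -/
def Orbit {A : Type*} (f : A → A) (a : A) : Set A :=
  {b | ∃ n : ℕ, f^[n] a = b ∨ f^[n] b = a}

/-- The orbits of an injection structure, as subsets of the domain. -/
def Orbits {A : Type*} (f : A → A) : Set (Set A) :=
  {S | ∃ a, S = Orbit f a}

/-- An orbit of type ω: infinite and containing an element outside `ran f`. -/
def IsOmegaOrbit {A : Type*} (f : A → A) (S : Set A) : Prop :=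
  S ∈ Orbits f ∧ S.Infinite ∧ ∃ b ∈ S, b ∉ Set.range f

/-- An orbit of type Z: infinite and contained in `ran (f^n)` for all `n`. -/
def IsZOrbit {A : Type*} (f : A → A) (S : Set A) : Prop :=
  S ∈ Orbits f ∧ S.Infinite ∧ ∀ n : ℕ, S ⊆ Set.range f^[n]

namespace InjStruct

universe u

open Function Set

variable {A B : Type*} {f : A → A} {g : B → B} {a b c x y : A}

lemma mem_orbit_self (f : A → A) (a : A) : a ∈ Orbit f a := ⟨0, .inl rfl⟩

lemma iterate_mem_orbit (f : A → A) (n : ℕ) (a : A) : f^[n] a ∈ Orbit f a := ⟨n, .inl rfl⟩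

lemma mem_orbit_symm (h : b ∈ Orbit f a) : a ∈ Orbit f b := by
  obtain ⟨n, h | h⟩ := h
  exacts [⟨n, .inr h⟩, ⟨n, .inl h⟩]

section basic

variable (hf : Function.Injective f)
include hf

lemma mem_orbit_trans (hab : b ∈ Orbit f a) (hbc : c ∈ Orbit f b) :
    c ∈ Orbit f a := by
  obtain ⟨m, hm | hm⟩ := hab <;> obtain ⟨n, hn | hn⟩ := hbc
  · exact ⟨n + m, .inl (by rw [Function.iterate_add_apply, hm, hn])⟩
  · rcases le_total m n with h | h
    · refine ⟨n - m, .inr (hf.iterate m ?_)⟩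
      rw [← Function.iterate_add_apply, Nat.add_sub_cancel' h, hn, hm]
    · refine ⟨m - n, .inl (hf.iterate n ?_)⟩
      rw [← Function.iterate_add_apply, Nat.add_sub_cancel' h, hm, hn]
  · rcases le_total m n with h | h
    · refine ⟨n - m, .inl ?_⟩
      rw [← hm, ← Function.iterate_add_apply, Nat.sub_add_cancel h, hn]
    · refine ⟨m - n, .inr ?_⟩
      rw [← hn, ← Function.iterate_add_apply, Nat.sub_add_cancel h, hm]
  · exact ⟨m + n, .inr (by rw [Function.iterate_add_apply, hn, hm])⟩

lemma orbit_eq_of_mem (h : b ∈ Orbit f a) : Orbit f b = Orbit f a :=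
  Set.ext fun _ => ⟨fun hc => mem_orbit_trans hf h hc,
    fun hc => mem_orbit_trans hf (mem_orbit_symm h) hc⟩

lemma orbit_eq_orbit {S : Set A} (hS : S ∈ Orbits f) (ha : a ∈ S) : S = Orbit f a := by
  obtain ⟨c, rfl⟩ := hS; exact (orbit_eq_of_mem hf ha).symm

lemma apply_mem_orbit (hx : x ∈ Orbit f a) : f x ∈ Orbit f a :=
  mem_orbit_trans hf hx ⟨1, .inl (by simp)⟩

lemma cancel_iterate {m n : ℕ} (h : m ≤ n) (heq : f^[n] a = f^[m] a) : f^[n - m] a = a := by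
  apply hf.iterate m
  rw [← Function.iterate_add_apply, Nat.add_sub_cancel' h, heq]

lemma iterate_inj_of_aperiodic (ha : ∀ p, 0 < p → f^[p] a ≠ a) {m n : ℕ}
    (h : f^[m] a = f^[n] a) : m = n := by
  rcases le_total m n with hle | hle
  · by_contra hne
    exact ha (n - m) (by omega) (cancel_iterate hf hle h.symm)
  · by_contra hne
    exact ha (m - n) (by omega) (cancel_iterate hf hle h)

lemma orbit_infinite_of_aperiodic (ha : ∀ p, 0 < p → f^[p] a ≠ a) :
    (Orbit f a).Infinite :=
  Set.infinite_of_injective_forall_mem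
    (f := fun n : ℕ => f^[n] a)
    (fun _ _ h => iterate_inj_of_aperiodic hf ha h) (fun n => iterate_mem_orbit f n a)

lemma exists_period_of_finite (hfin : (Orbit f a).Finite) : ∃ q, 0 < q ∧ f^[q] a = a := by
  by_contra h
  push_neg at h
  exact (orbit_infinite_of_aperiodic hf (fun p hp => h p hp)) hfin

omit hf

lemma iterate_mod_period {p : ℕ} (hp : f^[p] a = a) (n : ℕ) : f^[n] a = f^[n % p] a := by
  conv_lhs => rw [← Nat.mod_add_div n p, Function.iterate_add_apply, Function.iterate_mul]
  congr 1
  exact Function.IsFixedPt.iterate hp (n / p)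

include hf

lemma iterate_eq_iff_mod {p : ℕ} (hp0 : 0 < p) (hp : f^[p] a = a)
    (hmin : ∀ q, 0 < q → q < p → f^[q] a ≠ a) (m n : ℕ) :
    f^[m] a = f^[n] a ↔ m % p = n % p := by
  constructor
  · intro h
    rw [iterate_mod_period hp m, iterate_mod_period hp n] at h
    rcases le_total (m % p) (n % p) with hle | hle
    · by_contra hne
      exact hmin (n % p - m % p) (by omega)
        (by have := Nat.mod_lt n hp0; omega) (cancel_iterate hf hle h.symm)
    · by_contra hne
      exact hmin (m % p - n % p) (by omega)
        (by have := Nat.mod_lt m hp0; omega) (cancel_iterate hf hle h)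
  · intro h
    rw [iterate_mod_period hp m, iterate_mod_period hp n, h]

lemma orbit_forward_of_periodic {p : ℕ} (hp0 : 0 < p) (hp : f^[p] a = a) :
    ∀ x ∈ Orbit f a, ∃ n, f^[n] a = x := by
  rintro x ⟨n, hn | hn⟩
  · exact ⟨n, hn⟩
  · refine ⟨p * n - n, hf.iterate n ?_⟩
    rw [← Function.iterate_add_apply, Nat.add_sub_cancel' (Nat.le_mul_of_pos_left n hp0), hn,
      Function.iterate_mul]
    exact Function.IsFixedPt.iterate hp n

lemma orbit_eq_image_of_periodic {p : ℕ} (hp0 : 0 < p) (hp : f^[p] a = a) :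
    Orbit f a = (fun i => f^[i] a) '' (Set.Iio p) := by
  apply Set.Subset.antisymm
  · intro x hx
    obtain ⟨n, hn⟩ := orbit_forward_of_periodic hf hp0 hp x hx
    exact ⟨n % p, Nat.mod_lt n hp0, by show f^[n % p] a = x; rw [← iterate_mod_period hp, hn]⟩
  · rintro x ⟨i, _, rfl⟩
    exact iterate_mem_orbit f i a

lemma orbit_ncard_of_periodic {p : ℕ} (hp0 : 0 < p) (hp : f^[p] a = a)
    (hmin : ∀ q, 0 < q → q < p → f^[q] a ≠ a) :
    (Orbit f a).ncard = p := by
  rw [orbit_eq_image_of_periodic hf hp0 hp]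
  rw [Set.ncard_image_of_injOn]
  · rw [← Finset.coe_range, Set.ncard_coe_finset, Finset.card_range]
  · intro i hi j hj hij
    simp only [Set.mem_Iio] at hi hj
    have := (iterate_eq_iff_mod hf hp0 hp hmin i j).1 hij
    rwa [Nat.mod_eq_of_lt hi, Nat.mod_eq_of_lt hj] at this

lemma orbit_finite_of_periodic {p : ℕ} (hp0 : 0 < p) (hp : f^[p] a = a) :
    (Orbit f a).Finite := by
  rw [orbit_eq_image_of_periodic hf hp0 hp]
  exact (Set.finite_Iio p).image _

lemma aperiodic_of_orbit_infinite (h : (Orbit f a).Infinite) :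
    ∀ p, 0 < p → f^[p] a ≠ a := fun p hp0 hp => h (orbit_finite_of_periodic hf hp0 hp)

/-- Packaged structure of a finite orbit. -/
lemma finite_orbit_structure (hfin : (Orbit f a).Finite) :
    ∃ p, 0 < p ∧ f^[p] a = a ∧ (Orbit f a).ncard = p ∧
      (∀ m n : ℕ, f^[m] a = f^[n] a ↔ m % p = n % p) ∧
      (∀ x ∈ Orbit f a, ∃ n, f^[n] a = x) := by
  have hex : ∃ p, 0 < p ∧ f^[p] a = a := exists_period_of_finite hf hfin
  have hex' : ∃ p, p ≠ 0 ∧ f^[p] a = a := by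
    obtain ⟨p, h1, h2⟩ := hex; exact ⟨p, by omega, h2⟩
  classical
  let p := Nat.find hex'
  have hp : p ≠ 0 ∧ f^[p] a = a := Nat.find_spec hex'
  have hmin : ∀ q, 0 < q → q < p → f^[q] a ≠ a := fun q hq0 hqp hq =>
    Nat.find_min hex' hqp ⟨by omega, hq⟩
  have hp0 : 0 < p := by omega
  exact ⟨p, hp0, hp.2, orbit_ncard_of_periodic hf hp0 hp.2 hmin,
    iterate_eq_iff_mod hf hp0 hp.2 hmin, orbit_forward_of_periodic hf hp0 hp.2⟩

omit hf

lemma aperiodic_of_notMem_range (h0 : a ∉ Set.range f) : ∀ p, 0 < p → f^[p] a ≠ a := by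
  intro p hp0 hp
  apply h0
  rw [show p = (p - 1) + 1 by omega, Function.iterate_succ_apply'] at hp
  exact ⟨_, hp⟩

lemma orbit_forward_of_notMem_range (h0 : a ∉ Set.range f) :
    ∀ x ∈ Orbit f a, ∃ n, f^[n] a = x := by
  rintro x ⟨n, hn | hn⟩
  · exact ⟨n, hn⟩
  · match n, hn with
    | 0, hn => exact ⟨0, hn.symm⟩
    | (m+1), hn =>
      exact absurd ⟨_, (Function.iterate_succ_apply' f m x) ▸ hn⟩ h0

include hf

lemma exists_iterate_preimage_mem {S : Set A} (hS : S ∈ Orbits f)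
    (hsub : ∀ b ∈ S, b ∈ Set.range f) (n : ℕ) : ∀ x ∈ S, ∃ y ∈ S, f^[n] y = x := by
  induction n with
  | zero => exact fun x hx => ⟨x, hx, rfl⟩
  | succ n ih =>
    intro x hx
    obtain ⟨y, hy, rfl⟩ := ih x hx
    obtain ⟨z, hz⟩ := hsub y hy
    have hzS : z ∈ S := by
      have hyz : y ∈ Orbit f z := ⟨1, .inl (by simpa using hz)⟩
      rw [orbit_eq_orbit hf hS hy, orbit_eq_of_mem hf hyz]
      exact mem_orbit_self f z
    exact ⟨z, hzS, by rw [Function.iterate_succ_apply, hz]⟩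

lemma isZOrbit_of {S : Set A} (hS : S ∈ Orbits f) (hinf : S.Infinite)
    (hsub : ∀ b ∈ S, b ∈ Set.range f) : IsZOrbit f S := by
  refine ⟨hS, hinf, fun n x hx => ?_⟩
  obtain ⟨y, _, hy⟩ := exists_iterate_preimage_mem hf hS hsub n x hx
  exact ⟨y, hy⟩


end basic

section iso

variable {b0 : B}

/-- Finite-orbit case of the per-orbit isomorphism. -/
lemma orbit_iso_fin (hf : Function.Injective f) (hg : Function.Injective g) {a : A} {b : B}
    (hfa : (Orbit f a).Finite) (hfb : (Orbit g b).Finite)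
    (hcard : (Orbit f a).ncard = (Orbit g b).ncard) :
    ∃ φ : A → B, Set.BijOn φ (Orbit f a) (Orbit g b) ∧
      ∀ x ∈ Orbit f a, φ (f x) = g (φ x) := by
  classical
  obtain ⟨p, hp0, hp, hpcard, hpiff, hpfwd⟩ := finite_orbit_structure hf hfa
  obtain ⟨q, hq0, hq, hqcard, hqiff, hqfwd⟩ := finite_orbit_structure hg hfb
  have hpq : p = q := by rw [← hpcard, ← hqcard, hcard]
  subst hpq
  refine ⟨fun x => if hx : ∃ n, f^[n] a = x then g^[Nat.find hx] b else b, ⟨?_, ?_, ?_⟩, ?_⟩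
  · -- MapsTo
    intro x hx
    obtain ⟨n, hn⟩ := hpfwd x hx
    beta_reduce
    rw [dif_pos ⟨n, hn⟩]
    exact iterate_mem_orbit g _ b
  · -- InjOn
    intro x hx y hy hxy
    obtain ⟨n, hn⟩ := hpfwd x hx
    obtain ⟨m, hm⟩ := hpfwd y hy
    beta_reduce at hxy
    rw [dif_pos ⟨n, hn⟩, dif_pos ⟨m, hm⟩] at hxy
    have hmod := (hqiff _ _).1 hxy
    have h2 : f^[Nat.find ⟨n, hn⟩] a = f^[Nat.find ⟨m, hm⟩] a := (hpiff _ _).2 hmod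
    rw [Nat.find_spec (⟨n, hn⟩ : ∃ n, f^[n] a = x),
      Nat.find_spec (⟨m, hm⟩ : ∃ n, f^[n] a = y)] at h2
    rw [← hn, ← hm] at *
    exact h2
  · -- SurjOn
    intro t ht
    obtain ⟨m, hm⟩ := hqfwd t ht
    refine ⟨f^[m] a, iterate_mem_orbit f m a, ?_⟩
    have hex : ∃ n, f^[n] a = f^[m] a := ⟨m, rfl⟩
    beta_reduce
    rw [dif_pos hex]
    have := (hpiff _ _).1 (Nat.find_spec hex)
    rw [← hm]
    exact (hqiff _ _).2 this
  · -- equivariance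
    intro x hx
    obtain ⟨n, hn⟩ := hpfwd x hx
    have hex : ∃ m, f^[m] a = x := ⟨n, hn⟩
    have hex' : ∃ m, f^[m] a = f x := ⟨Nat.find hex + 1, by
      rw [Function.iterate_succ_apply', Nat.find_spec hex]⟩
    beta_reduce
    rw [dif_pos hex, dif_pos hex']
    rw [← Function.iterate_succ_apply' g]
    apply (hqiff _ _).2
    apply (hpiff _ _).1
    rw [Nat.find_spec hex', Function.iterate_succ_apply', Nat.find_spec hex]

/-- ω-orbit case of the per-orbit isomorphism. -/
lemma orbit_iso_omega (hf : Function.Injective f) (hg : Function.Injective g) {a : A} {b : B}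
    (ha : a ∉ Set.range f) (hb : b ∉ Set.range g) :
    ∃ φ : A → B, Set.BijOn φ (Orbit f a) (Orbit g b) ∧
      ∀ x ∈ Orbit f a, φ (f x) = g (φ x) := by
  classical
  have hfap := aperiodic_of_notMem_range ha
  have hgap := aperiodic_of_notMem_range hb
  have hffwd := orbit_forward_of_notMem_range (f := f) ha
  have hgfwd := orbit_forward_of_notMem_range (f := g) hb
  refine ⟨fun x => if hx : ∃ n, f^[n] a = x then g^[Nat.find hx] b else b, ⟨?_, ?_, ?_⟩, ?_⟩
  · intro x hx
    obtain ⟨n, hn⟩ := hffwd x hx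
    beta_reduce
    rw [dif_pos ⟨n, hn⟩]
    exact iterate_mem_orbit g _ b
  · intro x hx y hy hxy
    obtain ⟨n, hn⟩ := hffwd x hx
    obtain ⟨m, hm⟩ := hffwd y hy
    beta_reduce at hxy
    rw [dif_pos ⟨n, hn⟩, dif_pos ⟨m, hm⟩] at hxy
    have := iterate_inj_of_aperiodic hg hgap hxy
    rw [← Nat.find_spec (⟨n, hn⟩ : ∃ n, f^[n] a = x),
      ← Nat.find_spec (⟨m, hm⟩ : ∃ n, f^[n] a = y), this]
  · intro t ht
    obtain ⟨m, hm⟩ := hgfwd t ht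
    refine ⟨f^[m] a, iterate_mem_orbit f m a, ?_⟩
    have hex : ∃ n, f^[n] a = f^[m] a := ⟨m, rfl⟩
    beta_reduce
    rw [dif_pos hex]
    have := iterate_inj_of_aperiodic hf hfap (Nat.find_spec hex)
    rw [this, hm]
  · intro x hx
    obtain ⟨n, hn⟩ := hffwd x hx
    have hex : ∃ m, f^[m] a = x := ⟨n, hn⟩
    have hex' : ∃ m, f^[m] a = f x := ⟨Nat.find hex + 1, by
      rw [Function.iterate_succ_apply', Nat.find_spec hex]⟩
    beta_reduce
    rw [dif_pos hex, dif_pos hex']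
    have : Nat.find hex' = Nat.find hex + 1 := by
      apply iterate_inj_of_aperiodic hf hfap
      rw [Nat.find_spec hex', Function.iterate_succ_apply', Nat.find_spec hex]
    rw [this, Function.iterate_succ_apply']

/-- Z-orbit case of the per-orbit isomorphism. -/
lemma orbit_iso_Z (hf : Function.Injective f) (hg : Function.Injective g) {a : A} {b : B}
    (hZa : IsZOrbit f (Orbit f a)) (hZb : IsZOrbit g (Orbit g b)) :
    ∃ φ : A → B, Set.BijOn φ (Orbit f a) (Orbit g b) ∧
      ∀ x ∈ Orbit f a, φ (f x) = g (φ x) := by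
  classical
  have hfap := aperiodic_of_orbit_infinite hf hZa.2.1
  have hgap := aperiodic_of_orbit_infinite hg hZb.2.1
  -- backward elements on the g side
  have hbk : ∀ n : ℕ, ∃ y : B, g^[n] y = b := fun n => hZb.2.2 n (mem_orbit_self g b)
  set yb : ℕ → B := fun n => (hbk n).choose with hyb_def
  have hyb : ∀ n, g^[n] (yb n) = b := fun n => (hbk n).choose_spec
  have hyb_mem : ∀ n, yb n ∈ Orbit g b := fun n => ⟨n, .inr (hyb n)⟩
  have hyb0 : yb 0 = b := hyb 0
  have hyb_succ : ∀ n, g (yb (n + 1)) = yb n := by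
    intro n
    apply hg.iterate n
    rw [← Function.iterate_succ_apply, hyb, hyb]
  have hyb_inj : ∀ m n, yb m = yb n → m = n := by
    intro m n h
    by_contra hne
    rcases Nat.lt_or_ge m n with hlt | hge
    · apply hgap (n - m) (by omega)
      have : g^[n] (yb m) = b := h ▸ hyb n
      rw [show n = (n - m) + m from by omega, Function.iterate_add_apply, hyb] at this
      exact this
    · apply hgap (m - n) (by omega)
      have : g^[m] (yb n) = b := h ▸ hyb m
      rw [show m = (m - n) + n from by omega, Function.iterate_add_apply, hyb] at this
      exact this
  have hyb_not_fwd : ∀ m n, 0 < n → g^[m] b ≠ yb n := by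
    intro m n hn h
    apply hgap (n + m) (by omega)
    rw [Function.iterate_add_apply, h, hyb]
  -- uniqueness of backward exponents on the f side
  have hbk_uniq : ∀ (x : A) (m n : ℕ), f^[m] x = a → f^[n] x = a → m = n := by
    intro x m n hm hn
    by_contra hne
    rcases Nat.lt_or_ge m n with hlt | hge
    · exact hfap (n - m) (by omega) (by
        rw [show n = (n - m) + m from by omega, Function.iterate_add_apply, hm] at hn; exact hn)
    · exact hfap (m - n) (by omega) (by
        rw [show m = (m - n) + n from by omega, Function.iterate_add_apply, hn] at hm; exact hm)
  have hnomix : ∀ (x : A) (m n : ℕ), f^[m] a = x → f^[n] x = a → m = 0 ∧ n = 0 := by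
    intro x m n hm hn
    have : f^[n + m] a = a := by rw [Function.iterate_add_apply, hm, hn]
    have hnm : n + m = 0 := by
      by_contra h
      exact hfap (n + m) (by omega) this
    omega
  refine ⟨fun x =>
    if hx : ∃ n, f^[n] a = x then g^[Nat.find hx] b
    else if hx' : ∃ n, f^[n] x = a then yb (Nat.find hx') else b, ⟨?_, ?_, ?_⟩, ?_⟩
  · -- MapsTo
    rintro x ⟨n, hn | hn⟩
    · beta_reduce
      rw [dif_pos ⟨n, hn⟩]; exact iterate_mem_orbit g _ b
    · by_cases hx : ∃ m, f^[m] a = x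
      · beta_reduce
        rw [dif_pos hx]; exact iterate_mem_orbit g _ b
      · beta_reduce
        rw [dif_neg hx, dif_pos ⟨n, hn⟩]; exact hyb_mem _
  · -- InjOn
    intro x hx y hy hxy
    by_cases h1 : ∃ n, f^[n] a = x <;> by_cases h2 : ∃ n, f^[n] a = y
    · beta_reduce at hxy
      rw [dif_pos h1, dif_pos h2] at hxy
      have := iterate_inj_of_aperiodic hg hgap hxy
      rw [← Nat.find_spec h1, ← Nat.find_spec h2, this]
    · obtain ⟨n, hn | hn⟩ := hy
      · exact absurd ⟨n, hn⟩ h2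
      · beta_reduce at hxy
        rw [dif_pos h1, dif_neg h2, dif_pos ⟨n, hn⟩] at hxy
        have hpos : 0 < Nat.find (⟨n, hn⟩ : ∃ m, f^[m] y = a) := by
          rcases Nat.eq_zero_or_pos (Nat.find (⟨n, hn⟩ : ∃ m, f^[m] y = a)) with h0 | h
          · have := Nat.find_spec (⟨n, hn⟩ : ∃ m, f^[m] y = a)
            rw [h0] at this
            exact absurd ⟨0, this.symm⟩ h2
          · exact h
        exact absurd hxy (hyb_not_fwd _ _ hpos)
    · obtain ⟨n, hn | hn⟩ := hx
      · exact absurd ⟨n, hn⟩ h1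
      · beta_reduce at hxy
        rw [dif_neg h1, dif_pos ⟨n, hn⟩, dif_pos h2] at hxy
        have hpos : 0 < Nat.find (⟨n, hn⟩ : ∃ m, f^[m] x = a) := by
          rcases Nat.eq_zero_or_pos (Nat.find (⟨n, hn⟩ : ∃ m, f^[m] x = a)) with h0 | h
          · have := Nat.find_spec (⟨n, hn⟩ : ∃ m, f^[m] x = a)
            rw [h0] at this
            exact absurd ⟨0, this.symm⟩ h1
          · exact h
        exact absurd hxy.symm (hyb_not_fwd _ _ hpos)
    · obtain ⟨n, hn | hn⟩ := hx
      · exact absurd ⟨n, hn⟩ h1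
      obtain ⟨m, hm | hm⟩ := hy
      · exact absurd ⟨m, hm⟩ h2
      beta_reduce at hxy
      rw [dif_neg h1, dif_pos ⟨n, hn⟩, dif_neg h2, dif_pos ⟨m, hm⟩] at hxy
      have heq := hyb_inj _ _ hxy
      have h3 := Nat.find_spec (⟨n, hn⟩ : ∃ k, f^[k] x = a)
      have h4 := Nat.find_spec (⟨m, hm⟩ : ∃ k, f^[k] y = a)
      rw [heq] at h3
      exact hf.iterate _ (h3.trans h4.symm)
  · -- SurjOn
    rintro t ⟨m, hm | hm⟩
    · refine ⟨f^[m] a, iterate_mem_orbit f m a, ?_⟩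
      have hex : ∃ n, f^[n] a = f^[m] a := ⟨m, rfl⟩
      beta_reduce
      rw [dif_pos hex]
      have := iterate_inj_of_aperiodic hf hfap (Nat.find_spec hex)
      rw [this, hm]
    · rcases Nat.eq_zero_or_pos m with rfl | hm0
      · refine ⟨a, mem_orbit_self f a, ?_⟩
        have hex : ∃ n, f^[n] a = a := ⟨0, rfl⟩
        beta_reduce
        rw [dif_pos hex]
        have := iterate_inj_of_aperiodic hf hfap (n := 0) (Nat.find_spec hex)
        rw [this]
        exact hm.symm
      · obtain ⟨x, hxa⟩ := hZa.2.2 m (mem_orbit_self f a)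
        have hxS : x ∈ Orbit f a := ⟨m, .inr hxa⟩
        refine ⟨x, hxS, ?_⟩
        have h1 : ¬ ∃ n, f^[n] a = x := by
          rintro ⟨n, hn⟩
          have := hnomix x n m hn hxa
          omega
        beta_reduce
        rw [dif_neg h1, dif_pos ⟨m, hxa⟩]
        have : Nat.find (⟨m, hxa⟩ : ∃ n, f^[n] x = a) = m :=
          hbk_uniq x (Nat.find (⟨m, hxa⟩ : ∃ n, f^[n] x = a)) m
            (Nat.find_spec (⟨m, hxa⟩ : ∃ n, f^[n] x = a)) hxa
        rw [this]
        apply hg.iterate m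
        rw [hyb, hm]
  · -- equivariance
    intro x hx
    by_cases h1 : ∃ n, f^[n] a = x
    · beta_reduce
      rw [dif_pos h1]
      have hex' : ∃ m, f^[m] a = f x := ⟨Nat.find h1 + 1, by
        rw [Function.iterate_succ_apply', Nat.find_spec h1]⟩
      beta_reduce
      rw [dif_pos hex']
      have : Nat.find hex' = Nat.find h1 + 1 := by
        apply iterate_inj_of_aperiodic hf hfap
        rw [Nat.find_spec hex', Function.iterate_succ_apply', Nat.find_spec h1]
      rw [this, Function.iterate_succ_apply']
    · obtain ⟨n, hn | hn⟩ := hx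
      · exact absurd ⟨n, hn⟩ h1
      beta_reduce
      conv_rhs => rw [dif_neg h1, dif_pos ⟨n, hn⟩]
      set k := Nat.find (⟨n, hn⟩ : ∃ m, f^[m] x = a) with hk_def
      have hk : f^[k] x = a := Nat.find_spec (⟨n, hn⟩ : ∃ m, f^[m] x = a)
      have hkpos : 0 < k := by
        rcases Nat.eq_zero_or_pos k with h0 | h
        · rw [h0] at hk
          exact absurd ⟨0, hk.symm⟩ h1
        · exact h
      by_cases hk1 : k = 1
      · -- f x = a
        have hfx : f x = a := by
          have := hk; rw [hk1] at this; simpa using this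
        have h1' : ∃ m, f^[m] a = f x :=
          ⟨0, by rw [Function.iterate_zero_apply]; exact hfx.symm⟩
        beta_reduce
        rw [dif_pos h1']
        have hfind0 : Nat.find h1' = 0 := by
          apply iterate_inj_of_aperiodic hf hfap (n := 0)
          rw [Nat.find_spec h1', Function.iterate_zero_apply]
          exact hfx
        rw [hfind0, hk1, ← hyb0, ← hyb_succ 0]
        simp
      · -- k ≥ 2
        have hk2 : 2 ≤ k := by omega
        have h1' : ¬ ∃ m, f^[m] a = f x := by
          rintro ⟨m, hm⟩
          rcases Nat.eq_zero_or_pos m with rfl | hm0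
          · have : f^[1] x = a := by
              rw [Function.iterate_one]
              exact ((by simpa using hm : a = f x)).symm
            have : k ≤ 1 := Nat.find_le this
            omega
          · rw [show m = (m - 1) + 1 from by omega, Function.iterate_succ_apply'] at hm
            exact h1 ⟨m - 1, hf hm⟩
        have h2' : ∃ m, f^[m] (f x) = a := ⟨k - 1, by
          rw [← Function.iterate_succ_apply, Nat.succ_eq_add_one, show k - 1 + 1 = k from by omega]; exact hk⟩
        beta_reduce
        rw [dif_neg h1', dif_pos h2']
        have hfind : Nat.find h2' = k - 1 := hbk_uniq (f x) _ (k - 1) (Nat.find_spec h2')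
          (by rw [← Function.iterate_succ_apply, Nat.succ_eq_add_one, show k - 1 + 1 = k from by omega]; exact hk)
        have hsucc := hyb_succ (k - 1)
        rw [show k - 1 + 1 = k from by omega] at hsucc
        rw [hfind, ← hsucc]

end iso

section classify

open Classical in
/-- Classifier of orbit types: `inl k` for finite of size `k`, `inr true` for ω,
`inr false` for Z. -/
noncomputable def cls (f : A → A) (S : Set A) : ℕ ⊕ Bool :=
  if S.Finite then .inl S.ncard
  else .inr (if ∃ b ∈ S, b ∉ Set.range f then true else false)

lemma orbit_nonempty {S : Set A} (hS : S ∈ Orbits f) : S.Nonempty := by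
  obtain ⟨a, rfl⟩ := hS; exact ⟨a, mem_orbit_self f a⟩

variable (hf : Function.Injective f) {S : Set A}
include hf

lemma cls_ne_inl_zero (hS : S ∈ Orbits f) : cls f S ≠ .inl 0 := by
  classical
  by_cases hfin : S.Finite
  · simp only [cls, if_pos hfin]
    intro h
    have h0 : S.ncard = 0 := by injection h
    have := (Set.ncard_pos hfin).2 (orbit_nonempty hS)
    omega
  · simp only [cls, if_neg hfin]
    intro h; injection h

lemma cls_inl_iff (hS : S ∈ Orbits f) {k : ℕ} (hk : 1 ≤ k) :
    cls f S = .inl k ↔ S.ncard = k := by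
  classical
  by_cases hfin : S.Finite
  · simp only [cls, if_pos hfin]
    constructor
    · intro h; injection h
    · intro h; rw [h]
  · simp only [cls, if_neg hfin]
    constructor
    · intro h; injection h
    · intro h
      rw [Set.Infinite.ncard hfin] at h
      omega

lemma cls_inr_true_iff (hS : S ∈ Orbits f) :
    cls f S = .inr true ↔ IsOmegaOrbit f S := by
  classical
  by_cases hfin : S.Finite
  · simp only [cls, if_pos hfin]
    constructor
    · intro h; injection h
    · rintro ⟨_, hinf, _⟩; exact absurd hfin hinf
  · simp only [cls, if_neg hfin]
    by_cases hP : ∃ b ∈ S, b ∉ Set.range f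
    · simp only [if_pos hP]
      exact ⟨fun _ => ⟨hS, hfin, hP⟩, fun _ => trivial⟩
    · simp only [if_neg hP]
      constructor
      · intro h; injection h with h; simp at h
      · rintro ⟨_, _, hw⟩; exact absurd hw hP

lemma cls_inr_false_iff (hS : S ∈ Orbits f) :
    cls f S = .inr false ↔ IsZOrbit f S := by
  classical
  by_cases hfin : S.Finite
  · simp only [cls, if_pos hfin]
    constructor
    · intro h; injection h
    · rintro ⟨_, hinf, _⟩; exact absurd hfin hinf
  · simp only [cls, if_neg hfin]
    by_cases hP : ∃ b ∈ S, b ∉ Set.range f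
    · simp only [if_pos hP]
      constructor
      · intro h; injection h with h; simp at h
      · rintro ⟨_, _, hsub⟩
        obtain ⟨b0, hb0S, hb0⟩ := hP
        exact absurd (by simpa using hsub 1 hb0S) hb0
    · simp only [if_neg hP]
      refine ⟨fun _ => ?_, fun _ => trivial⟩
      push_neg at hP
      exact isZOrbit_of hf hS hfin (fun b hb => hP b hb)

omit hf

/-- Combined per-orbit isomorphism lemma. -/
lemma orbit_iso (hf : Function.Injective f) (hg : Function.Injective g)
    {S : Set A} {T : Set B} (hS : S ∈ Orbits f) (hT : T ∈ Orbits g)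
    (hc : cls f S = cls g T) :
    ∃ φ : A → B, Set.BijOn φ S T ∧ ∀ x ∈ S, φ (f x) = g (φ x) := by
  classical
  by_cases hfa : S.Finite <;> by_cases hfb : T.Finite
  · obtain ⟨a, rfl⟩ := hS
    obtain ⟨b, rfl⟩ := hT
    refine orbit_iso_fin hf hg hfa hfb ?_
    simp only [cls, if_pos hfa, if_pos hfb] at hc
    injection hc
  · simp only [cls, if_pos hfa, if_neg hfb] at hc; injection hc
  · simp only [cls, if_neg hfa, if_pos hfb] at hc; injection hc
  · simp only [cls, if_neg hfa, if_neg hfb] at hc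
    injection hc with hc
    by_cases hP : ∃ b ∈ S, b ∉ Set.range f
    · have hQ : ∃ c ∈ T, c ∉ Set.range g := by
        by_contra hQ
        rw [if_pos hP, if_neg hQ] at hc
        simp at hc
      obtain ⟨a0, ha0S, ha0⟩ := hP
      obtain ⟨b0, hb0T, hb0⟩ := hQ
      have hSa : S = Orbit f a0 := orbit_eq_orbit hf hS ha0S
      have hTb : T = Orbit g b0 := orbit_eq_orbit hg hT hb0T
      rw [hSa, hTb]
      exact orbit_iso_omega hf hg ha0 hb0
    · have hQ : ¬ ∃ c ∈ T, c ∉ Set.range g := by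
        intro hQ
        rw [if_neg hP, if_pos hQ] at hc
        simp at hc
      push_neg at hP hQ
      have hZS : IsZOrbit f S := isZOrbit_of hf hS hfa (fun x hx => hP x hx)
      have hZT : IsZOrbit g T := isZOrbit_of hg hT hfb (fun x hx => hQ x hx)
      obtain ⟨a, rfl⟩ := hS
      obtain ⟨b, rfl⟩ := hT
      exact orbit_iso_Z hf hg hZS hZT

end classify

section forward

variable (e : A ≃ B) (hcomm : ∀ a, e (f a) = g (e a))
include hcomm

lemma equiv_iterate (n : ℕ) (a : A) : e (f^[n] a) = g^[n] (e a) := by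
  induction n with
  | zero => rfl
  | succ n ih => rw [Function.iterate_succ_apply', Function.iterate_succ_apply', hcomm, ih]

lemma symm_comm : ∀ b, e.symm (g b) = f (e.symm b) := by
  intro b
  apply e.injective
  rw [Equiv.apply_symm_apply, hcomm, Equiv.apply_symm_apply]

lemma image_orbit (a : A) : e '' Orbit f a = Orbit g (e a) := by
  ext y
  constructor
  · rintro ⟨x, ⟨n, hn | hn⟩, rfl⟩
    · exact ⟨n, .inl (by rw [← hn, equiv_iterate e hcomm])⟩
    · exact ⟨n, .inr (by rw [← equiv_iterate e hcomm, hn])⟩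
  · rintro ⟨n, hn | hn⟩
    · exact ⟨f^[n] a, ⟨n, .inl rfl⟩, by rw [equiv_iterate e hcomm, hn]⟩
    · refine ⟨e.symm y, ⟨n, .inr ?_⟩, by simp⟩
      apply e.injective
      rw [equiv_iterate e hcomm, Equiv.apply_symm_apply, hn]

lemma image_mem_orbits {S : Set A} (hS : S ∈ Orbits f) : e '' S ∈ Orbits g := by
  obtain ⟨a, rfl⟩ := hS
  exact ⟨e a, image_orbit e hcomm a⟩

lemma image_isOmega {S : Set A} (h : IsOmegaOrbit f S) : IsOmegaOrbit g (e '' S) := by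
  obtain ⟨hS, hinf, b0, hb0S, hb0⟩ := h
  refine ⟨image_mem_orbits e hcomm hS, hinf.image (e.injective.injOn),
    e b0, Set.mem_image_of_mem _ hb0S, ?_⟩
  rintro ⟨c, hc⟩
  obtain ⟨c', rfl⟩ := e.surjective c
  rw [← hcomm] at hc
  exact hb0 ⟨c', e.injective hc⟩

lemma image_isZ {S : Set A} (h : IsZOrbit f S) : IsZOrbit g (e '' S) := by
  obtain ⟨hS, hinf, hsub⟩ := h
  refine ⟨image_mem_orbits e hcomm hS, hinf.image (e.injective.injOn), fun n y hy => ?_⟩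
  obtain ⟨x, hxS, rfl⟩ := hy
  obtain ⟨u, hu⟩ := hsub n hxS
  exact ⟨e u, by rw [← equiv_iterate e hcomm, hu]⟩

end forward

lemma mk_subtype_eq {A B : Type u} (e : A ≃ B) (pA : Set A → Prop) (pB : Set B → Prop)
    (hAB : ∀ S, pA S → pB (e '' S)) (hBA : ∀ T, pB T → pA (e.symm '' T)) :
    Cardinal.mk {S : Set A // pA S} = Cardinal.mk {T : Set B // pB T} := by
  apply Cardinal.mk_congr
  refine ⟨fun S => ⟨e '' S.1, hAB _ S.2⟩, fun T => ⟨e.symm '' T.1, hBA _ T.2⟩, ?_, ?_⟩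
  · intro S
    exact Subtype.ext (Equiv.symm_image_image e S.1)
  · intro T
    exact Subtype.ext (Equiv.image_symm_image e T.1)


section backward

variable {A B : Type u} {f : A → A} {g : B → B}

lemma backward (hf : Function.Injective f) (hg : Function.Injective g)
    (h1 : ∀ k : ℕ, 1 ≤ k →
        Cardinal.mk {S : Set A // S ∈ Orbits f ∧ S.ncard = k} =
          Cardinal.mk {S : Set B // S ∈ Orbits g ∧ S.ncard = k})
    (h2 : Cardinal.mk {S : Set A // IsOmegaOrbit f S} =
        Cardinal.mk {S : Set B // IsOmegaOrbit g S})
    (h3 : Cardinal.mk {S : Set A // IsZOrbit f S} =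
        Cardinal.mk {S : Set B // IsZOrbit g S}) :
    ∃ h : A ≃ B, ∀ a, h (f a) = g (h a) := by
  classical
  have fib : ∀ i : ℕ ⊕ Bool,
      Nonempty ({S : {S : Set A // S ∈ Orbits f} // cls f S.1 = i} ≃
        {T : {T : Set B // T ∈ Orbits g} // cls g T.1 = i}) := by
    intro i
    have bridgeA : {S : {S : Set A // S ∈ Orbits f} // cls f S.1 = i} ≃
        {S : Set A // S ∈ Orbits f ∧ cls f S = i} :=
      Equiv.subtypeSubtypeEquivSubtypeInter (· ∈ Orbits f) (fun S => cls f S = i)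
    have bridgeB : {T : {T : Set B // T ∈ Orbits g} // cls g T.1 = i} ≃
        {T : Set B // T ∈ Orbits g ∧ cls g T = i} :=
      Equiv.subtypeSubtypeEquivSubtypeInter (· ∈ Orbits g) (fun T => cls g T = i)
    match i with
    | .inl 0 =>
      have hA : IsEmpty {S : Set A // S ∈ Orbits f ∧ cls f S = .inl 0} :=
        ⟨fun x => cls_ne_inl_zero hf x.2.1 x.2.2⟩
      have hB : IsEmpty {T : Set B // T ∈ Orbits g ∧ cls g T = .inl 0} :=
        ⟨fun x => cls_ne_inl_zero hg x.2.1 x.2.2⟩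
      exact ⟨bridgeA.trans ((Equiv.equivOfIsEmpty _ _).trans bridgeB.symm)⟩
    | .inl (k+1) =>
      obtain ⟨e0⟩ := Cardinal.eq.1 (h1 (k+1) (by omega))
      refine ⟨bridgeA.trans ((((Equiv.subtypeEquivRight ?_).trans e0).trans
        (Equiv.subtypeEquivRight ?_)).trans bridgeB.symm)⟩
      · exact fun S => and_congr_right fun hS => cls_inl_iff hf hS (by omega)
      · exact fun T => (and_congr_right fun hT => cls_inl_iff hg hT (by omega)).symm
    | .inr true =>
      obtain ⟨e0⟩ := Cardinal.eq.1 h2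
      refine ⟨bridgeA.trans ((((Equiv.subtypeEquivRight ?_).trans e0).trans
        (Equiv.subtypeEquivRight ?_)).trans bridgeB.symm)⟩
      · refine fun S => ⟨fun hS => (cls_inr_true_iff hf hS.1).1 hS.2,
          fun hO => ⟨hO.1, (cls_inr_true_iff hf hO.1).2 hO⟩⟩
      · refine fun T => ⟨fun hO => ⟨hO.1, (cls_inr_true_iff hg hO.1).2 hO⟩,
          fun hT => (cls_inr_true_iff hg hT.1).1 hT.2⟩
    | .inr false =>
      obtain ⟨e0⟩ := Cardinal.eq.1 h3
      refine ⟨bridgeA.trans ((((Equiv.subtypeEquivRight ?_).trans e0).trans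
        (Equiv.subtypeEquivRight ?_)).trans bridgeB.symm)⟩
      · refine fun S => ⟨fun hS => (cls_inr_false_iff hf hS.1).1 hS.2,
          fun hO => ⟨hO.1, (cls_inr_false_iff hf hO.1).2 hO⟩⟩
      · refine fun T => ⟨fun hO => ⟨hO.1, (cls_inr_false_iff hg hO.1).2 hO⟩,
          fun hT => (cls_inr_false_iff hg hT.1).1 hT.2⟩
  let E : ∀ i, {S : {S : Set A // S ∈ Orbits f} // cls f S.1 = i} ≃
      {T : {T : Set B // T ∈ Orbits g} // cls g T.1 = i} := fun i => (fib i).some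
  let Φ : {S : Set A // S ∈ Orbits f} ≃ {T : Set B // T ∈ Orbits g} :=
    ((Equiv.sigmaFiberEquiv (fun S : {S : Set A // S ∈ Orbits f} => cls f S.1)).symm.trans
      (Equiv.sigmaCongrRight E)).trans
      (Equiv.sigmaFiberEquiv (fun T : {T : Set B // T ∈ Orbits g} => cls g T.1))
  have hΦval : ∀ S, Φ S = (E (cls f S.1) ⟨S, rfl⟩).1 := fun S => rfl
  have hΦ : ∀ S, cls g (Φ S).1 = cls f S.1 := by
    intro S
    rw [hΦval S]
    exact (E (cls f S.1) ⟨S, rfl⟩).2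
  have hiso : ∀ S : {S : Set A // S ∈ Orbits f},
      ∃ φ : A → B, Set.BijOn φ S.1 (Φ S).1 ∧ ∀ x ∈ S.1, φ (f x) = g (φ x) :=
    fun S => orbit_iso hf hg S.2 (Φ S).2 (hΦ S).symm
  choose φ hbij hcm using hiso
  let h : A → B := fun a => φ ⟨Orbit f a, a, rfl⟩ a
  have hcongr : ∀ (x : A) (S : {S : Set A // S ∈ Orbits f}), x ∈ S.1 → h x = φ S x := by
    intro x S hx
    have hX : (⟨Orbit f x, x, rfl⟩ : {S : Set A // S ∈ Orbits f}) = S :=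
      Subtype.ext (orbit_eq_orbit hf S.2 hx).symm
    show φ ⟨Orbit f x, x, rfl⟩ x = φ S x
    rw [hX]
  have hequiv : ∀ a, h (f a) = g (h a) := by
    intro a
    have hfa : f a ∈ Orbit f a := apply_mem_orbit hf (mem_orbit_self f a)
    rw [hcongr (f a) ⟨Orbit f a, a, rfl⟩ hfa]
    exact hcm _ a (mem_orbit_self f a)
  have hmem : ∀ x : A, h x ∈ (Φ ⟨Orbit f x, x, rfl⟩).1 :=
    fun x => (hbij ⟨Orbit f x, x, rfl⟩).1 (mem_orbit_self f x)
  have hinj : Function.Injective h := by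
    intro x y hxy
    by_cases hS : (⟨Orbit f x, x, rfl⟩ : {S : Set A // S ∈ Orbits f}) = ⟨Orbit f y, y, rfl⟩
    · have hyx : y ∈ Orbit f x := by
        have := congrArg Subtype.val hS
        simp only at this
        rw [this]
        exact mem_orbit_self f y
      apply (hbij ⟨Orbit f x, x, rfl⟩).2.1 (mem_orbit_self f x) hyx
      rw [← hcongr x ⟨Orbit f x, x, rfl⟩ (mem_orbit_self f x),
        ← hcongr y ⟨Orbit f x, x, rfl⟩ hyx]
      exact hxy
    · exfalso
      apply hS
      apply Φ.injective
      apply Subtype.ext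
      have e1 : (Φ ⟨Orbit f x, x, rfl⟩).1 = Orbit g (h x) :=
        orbit_eq_orbit hg (Φ ⟨Orbit f x, x, rfl⟩).2 (hmem x)
      have e2 : (Φ ⟨Orbit f y, y, rfl⟩).1 = Orbit g (h y) :=
        orbit_eq_orbit hg (Φ ⟨Orbit f y, y, rfl⟩).2 (hmem y)
      rw [e1, e2, hxy]
  have hsurj : Function.Surjective h := by
    intro t
    set S : {S : Set A // S ∈ Orbits f} := Φ.symm ⟨Orbit g t, t, rfl⟩ with hS_def
    have htT : t ∈ (Φ S).1 := by
      rw [hS_def, Equiv.apply_symm_apply]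
      exact mem_orbit_self g t
    obtain ⟨x, hxS, hxt⟩ := (hbij S).2.2 htT
    exact ⟨x, by rw [hcongr x S hxS]; exact hxt⟩
  exact ⟨Equiv.ofBijective h ⟨hinj, hsurj⟩, hequiv⟩

end backward

end InjStruct

theorem injection_structures_isomorphic_iff (A B : Type) [Countable A] [Countable B]
    (f : A → A) (g : B → B) (hf : Function.Injective f) (hg : Function.Injective g) :
    (∃ h : A ≃ B, ∀ a, h (f a) = g (h a)) ↔
      ((∀ k : ℕ, 1 ≤ k →
          Cardinal.mk {S : Set A // S ∈ Orbits f ∧ S.ncard = k} =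
            Cardinal.mk {S : Set B // S ∈ Orbits g ∧ S.ncard = k}) ∧
        Cardinal.mk {S : Set A // IsOmegaOrbit f S} =
          Cardinal.mk {S : Set B // IsOmegaOrbit g S} ∧
        Cardinal.mk {S : Set A // IsZOrbit f S} =
          Cardinal.mk {S : Set B // IsZOrbit g S}) := by
  constructor
  · rintro ⟨e, hcomm⟩
    have hsymm := InjStruct.symm_comm e hcomm
    refine ⟨fun k _ => ?_, ?_, ?_⟩
    · refine InjStruct.mk_subtype_eq e _ _ (fun S hS => ?_) (fun T hT => ?_)
      · exact ⟨InjStruct.image_mem_orbits e hcomm hS.1,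
          by rw [Set.ncard_image_of_injective _ e.injective]; exact hS.2⟩
      · exact ⟨InjStruct.image_mem_orbits e.symm hsymm hT.1,
          by rw [Set.ncard_image_of_injective _ e.symm.injective]; exact hT.2⟩
    · exact InjStruct.mk_subtype_eq e _ _
        (fun S hS => InjStruct.image_isOmega e hcomm hS)
        (fun T hT => InjStruct.image_isOmega e.symm hsymm hT)
    · exact InjStruct.mk_subtype_eq e _ _
        (fun S hS => InjStruct.image_isZ e hcomm hS)
        (fun T hT => InjStruct.image_isZ e.symm hsymm hT)
  · rintro ⟨h1, h2, h3⟩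
    exact InjStruct.backward hf hg h1 h2 h3
end

section
/- Two countable equivalence structures are isomorphic if and only if they have the same character and the same number of infinite equivalence classes. -/
/-- The equivalence class of `a`. -/
def eqvCl {A : Type} (E : A → A → Prop) (a : A) : Set A := {x | E x a}

/-- The set of equivalence classes. -/
def Classes {A : Type} (E : A → A → Prop) : Set (Set A) :=
  {S | ∃ a, S = eqvCl E a}

/-- The character of an equivalence structure: the pairs `(k, n)` with
`k, n ≥ 1` such that there are at least `n` equivalence classes of size
exactly `k`. -/
def charOf {A : Type} (E : A → A → Prop) : Set (ℕ × ℕ) :=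
  {p | 1 ≤ p.1 ∧ 1 ≤ p.2 ∧
    (p.2 : Cardinal) ≤ Cardinal.mk {S : Set A // S ∈ Classes E ∧ S.ncard = p.1}}

namespace EqAux

open Cardinal

lemma cast_ncard {A : Type} {s : Set A} (hs : s.Finite) :
    ((s.ncard : Cardinal)) = Cardinal.mk s := by
  have := hs.fintype
  rw [Cardinal.mk_fintype, Set.ncard_eq_toFinset_card', Set.toFinset_card]

variable {A : Type} (E : A → A → Prop) (hE : Equivalence E)

def std : Setoid A := ⟨E, hE⟩

abbrev Q := Quotient (std E hE)

def cls : Q E hE → Set A :=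
  Quotient.lift (eqvCl E) (fun a b hab => by
    ext x
    exact ⟨fun h => hE.trans h hab, fun h => hE.trans h (hE.symm hab)⟩)

@[simp] lemma cls_mk (a : A) : cls E hE (Quotient.mk (std E hE) a) = eqvCl E a := rfl

lemma mem_cls {x : A} {q : Q E hE} :
    x ∈ cls E hE q ↔ Quotient.mk (std E hE) x = q := by
  induction q using Quotient.ind with
  | _ a =>
    show E x a ↔ _
    exact ⟨fun h => Quotient.sound h, fun h => Quotient.exact h⟩

lemma cls_nonempty (q : Q E hE) : (cls E hE q).Nonempty := by
  induction q using Quotient.ind with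
  | _ a => exact ⟨a, hE.refl a⟩

noncomputable def sz (q : Q E hE) : ℕ := (cls E hE q).ncard

/-- classes of `E` satisfying `P` correspond to quotient elements whose class satisfies `P`. -/
noncomputable def clsEquiv (P : Set A → Prop) :
    {q : Q E hE // P (cls E hE q)} ≃ {S : Set A // S ∈ Classes E ∧ P S} := by
  refine Equiv.ofBijective
    (fun q => ⟨cls E hE q.1, ?_, q.2⟩) ⟨?_, ?_⟩
  · obtain ⟨a, ha⟩ := Quotient.exists_rep q.1
    exact ⟨a, by rw [← ha]; rfl⟩
  · rintro ⟨q1, h1⟩ ⟨q2, h2⟩ h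
    have h' : cls E hE q1 = cls E hE q2 := congrArg Subtype.val h
    obtain ⟨a, ha⟩ := Quotient.exists_rep q1
    have haa : a ∈ cls E hE q1 := by rw [← ha]; exact hE.refl a
    rw [h'] at haa
    exact Subtype.ext (ha ▸ (mem_cls E hE).mp haa)
  · rintro ⟨S, ⟨a, rfl⟩, hP⟩
    exact ⟨⟨Quotient.mk (std E hE) a, hP⟩, rfl⟩


lemma mk_fiber [Countable A] (q : Q E hE) :
    Cardinal.mk {x : A // Quotient.mk (std E hE) x = q} =
      if sz E hE q = 0 then ℵ₀ else (sz E hE q : Cardinal) := by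
  have e : {x : A // Quotient.mk (std E hE) x = q} ≃ (cls E hE q) :=
    Equiv.subtypeEquivRight (fun x => (mem_cls E hE).symm)
  rw [Cardinal.mk_congr e]
  by_cases h0 : sz E hE q = 0
  · rw [if_pos h0]
    have hinf : (cls E hE q).Infinite := by
      by_contra hfin
      rw [Set.not_infinite] at hfin
      rw [sz, Set.ncard_eq_zero hfin] at h0
      exact (cls_nonempty E hE q).ne_empty h0
    have : Infinite (cls E hE q) := hinf.to_subtype
    exact Cardinal.mk_eq_aleph0 _
  · rw [if_neg h0]
    have hfin : (cls E hE q).Finite := by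
      by_contra hfin
      exact h0 (Set.Infinite.ncard hfin)
    exact (cast_ncard hfin).symm

lemma card_det {c d : Cardinal} (hc : c ≤ ℵ₀) (hd : d ≤ ℵ₀)
    (h : ∀ n : ℕ, 1 ≤ n → ((n : Cardinal) ≤ c ↔ (n : Cardinal) ≤ d)) : c = d := by
  have h' : ∀ n : ℕ, ((n : Cardinal) ≤ c ↔ (n : Cardinal) ≤ d) := by
    intro n
    rcases Nat.eq_zero_or_pos n with rfl | hn
    · simp
    · exact h n hn
  rcases lt_or_eq_of_le hc with hc' | rfl
  · obtain ⟨m, rfl⟩ := Cardinal.lt_aleph0.mp hc'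
    rcases lt_or_eq_of_le hd with hd' | rfl
    · obtain ⟨m', rfl⟩ := Cardinal.lt_aleph0.mp hd'
      have h1 : m' ≤ m := by
        have := (h' m').mpr le_rfl
        exact_mod_cast this
      have h2 : m ≤ m' := by
        have := (h' m).mp le_rfl
        exact_mod_cast this
      rw [le_antisymm h1 h2]
    · have := (h' (m + 1)).mpr (le_of_lt (Cardinal.nat_lt_aleph0 _))
      have : m + 1 ≤ m := by exact_mod_cast this
      omega
  · rcases lt_or_eq_of_le hd with hd' | rfl
    · obtain ⟨m', rfl⟩ := Cardinal.lt_aleph0.mp hd'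
      have := (h' (m' + 1)).mp (le_of_lt (Cardinal.nat_lt_aleph0 _))
      have : m' + 1 ≤ m' := by exact_mod_cast this
      omega
    · rfl

end EqAux

open EqAux Cardinal in
theorem equivalence_structures_isomorphic_iff (A B : Type) [Countable A] [Countable B]
    (E : A → A → Prop) (F : B → B → Prop)
    (hE : Equivalence E) (hF : Equivalence F) :
    (∃ h : A ≃ B, ∀ x y : A, E x y ↔ F (h x) (h y)) ↔
      (charOf E = charOf F ∧
        Cardinal.mk {S : Set A // S ∈ Classes E ∧ S.Infinite} =
          Cardinal.mk {S : Set B // S ∈ Classes F ∧ S.Infinite}) := by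
  constructor
  · rintro ⟨h, hh⟩
    -- image of a class is a class
    have himg : ∀ a : A, h '' eqvCl E a = eqvCl F (h a) := by
      intro a
      ext y
      constructor
      · rintro ⟨x, hx, rfl⟩
        exact (hh x a).mp hx
      · intro hy
        exact ⟨h.symm y, by
          have : F (h (h.symm y)) (h a) := by rwa [h.apply_symm_apply]
          exact (hh _ _).mpr this, h.apply_symm_apply y⟩
    have hmem : ∀ S : Set A, S ∈ Classes E ↔ h '' S ∈ Classes F := by
      intro S
      constructor
      · rintro ⟨a, rfl⟩
        exact ⟨h a, himg a⟩
      · rintro ⟨b, hb⟩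
        refine ⟨h.symm b, ?_⟩
        have : h '' S = h '' (eqvCl E (h.symm b)) := by
          rw [himg, h.apply_symm_apply]; exact hb
        exact h.injective.image_injective this
    have hncard : ∀ S : Set A, (h '' S).ncard = S.ncard := fun S =>
      Set.ncard_image_of_injective S h.injective
    have hinfS : ∀ S : Set A, S.Infinite ↔ (h '' S).Infinite := fun S =>
      (Set.infinite_image_iff (h.injective.injOn)).symm
    have key : ∀ P : Set A → Prop, ∀ P' : Set B → Prop,
        (∀ S : Set A, P S ↔ P' (h '' S)) →
        Nonempty ({S : Set A // S ∈ Classes E ∧ P S} ≃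
          {S : Set B // S ∈ Classes F ∧ P' S}) := by
      intro P P' hPP'
      exact ⟨(Equiv.Set.congr h).subtypeEquiv (fun S => by
        show _ ↔ h '' S ∈ Classes F ∧ P' (h '' S)
        rw [← hmem, ← hPP'])⟩
    constructor
    · ext ⟨k, n⟩
      simp only [charOf, Set.mem_setOf_eq]
      have := key (fun S => S.ncard = k) (fun S => S.ncard = k)
        (fun S => by show S.ncard = k ↔ (h '' S).ncard = k; rw [hncard])
      rw [Cardinal.mk_congr this.some]
    · have := key Set.Infinite Set.Infinite hinfS
      exact Cardinal.mk_congr this.some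
  · rintro ⟨hchar, hinf⟩
    classical
    -- countability of quotients
    have hQE : Countable (Q E hE) := Quotient.mk_surjective.countable
    have hQF : Countable (Q F hF) := Quotient.mk_surjective.countable
    -- number of classes of each size agree
    have hk : ∀ k : ℕ,
        Cardinal.mk {q : Q E hE // sz E hE q = k} =
          Cardinal.mk {q : Q F hF // sz F hF q = k} := by
      intro k
      rcases Nat.eq_zero_or_pos k with rfl | hk1
      · -- infinite classes
        have e1 : {q : Q E hE // sz E hE q = 0} ≃
            {S : Set A // S ∈ Classes E ∧ S.Infinite} := by
          refine (Equiv.subtypeEquivRight (fun q => ?_)).trans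
            (clsEquiv E hE Set.Infinite)
          constructor
          · intro h0
            by_contra hfin
            rw [Set.not_infinite] at hfin
            rw [sz, Set.ncard_eq_zero hfin] at h0
            exact (cls_nonempty E hE q).ne_empty h0
          · intro hinf'
            exact hinf'.ncard
        have e2 : {q : Q F hF // sz F hF q = 0} ≃
            {S : Set B // S ∈ Classes F ∧ S.Infinite} := by
          refine (Equiv.subtypeEquivRight (fun q => ?_)).trans
            (clsEquiv F hF Set.Infinite)
          constructor
          · intro h0
            by_contra hfin
            rw [Set.not_infinite] at hfin
            rw [sz, Set.ncard_eq_zero hfin] at h0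
            exact (cls_nonempty F hF q).ne_empty h0
          · intro hinf'
            exact hinf'.ncard
        rw [Cardinal.mk_congr e1, Cardinal.mk_congr e2, hinf]
      · have e1 : {q : Q E hE // sz E hE q = k} ≃
            {S : Set A // S ∈ Classes E ∧ S.ncard = k} :=
          (Equiv.subtypeEquivRight (fun q => Iff.rfl)).trans
            (clsEquiv E hE (fun S => S.ncard = k))
        have e2 : {q : Q F hF // sz F hF q = k} ≃
            {S : Set B // S ∈ Classes F ∧ S.ncard = k} :=
          (Equiv.subtypeEquivRight (fun q => Iff.rfl)).trans
            (clsEquiv F hF (fun S => S.ncard = k))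
        rw [Cardinal.mk_congr e1, Cardinal.mk_congr e2]
        apply card_det
        · rw [← Cardinal.mk_congr e1]; exact Cardinal.mk_le_aleph0
        · rw [← Cardinal.mk_congr e2]; exact Cardinal.mk_le_aleph0
        · intro n hn
          have h1 := Set.ext_iff.mp hchar (k, n)
          simp only [charOf, Set.mem_setOf_eq] at h1
          constructor
          · intro hle
            exact (h1.mp ⟨hk1, hn, hle⟩).2.2
          · intro hle
            exact (h1.mpr ⟨hk1, hn, hle⟩).2.2
    -- choose bijections between same-size families of classes
    have ψ : ∀ k : ℕ, {q : Q E hE // sz E hE q = k} ≃ {q : Q F hF // sz F hF q = k} :=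
      fun k => Classical.choice (Cardinal.eq.mp (hk k))
    let φ : Q E hE ≃ Q F hF :=
      (Equiv.sigmaFiberEquiv (sz E hE)).symm.trans
        ((Equiv.sigmaCongrRight ψ).trans (Equiv.sigmaFiberEquiv (sz F hF)))
    have hφ : ∀ q, sz F hF (φ q) = sz E hE q := by
      intro q
      exact ((ψ (sz E hE q)) ⟨q, rfl⟩).2
    -- fibers over matched classes have the same cardinality
    have hfib : ∀ q : Q E hE,
        Cardinal.mk {x : A // Quotient.mk (std E hE) x = q} =
          Cardinal.mk {y : B // Quotient.mk (std F hF) y = φ q} := by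
      intro q
      rw [mk_fiber, mk_fiber, hφ]
    have g : ∀ q : Q E hE,
        {x : A // Quotient.mk (std E hE) x = q} ≃
          {y : B // Quotient.mk (std F hF) y = φ q} :=
      fun q => Classical.choice (Cardinal.eq.mp (hfib q))
    let h : A ≃ B :=
      (Equiv.sigmaFiberEquiv (Quotient.mk (std E hE))).symm.trans
        ((Equiv.sigmaCongr φ g).trans (Equiv.sigmaFiberEquiv (Quotient.mk (std F hF))))
    refine ⟨h, fun x y => ?_⟩
    have hmk : ∀ x : A, Quotient.mk (std F hF) (h x) = φ (Quotient.mk (std E hE) x) := by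
      intro x
      exact ((g (Quotient.mk (std E hE) x)) ⟨x, rfl⟩).2
    constructor
    · intro hxy
      have : Quotient.mk (std E hE) x = Quotient.mk (std E hE) y := Quotient.sound hxy
      have h2 : Quotient.mk (std F hF) (h x) = Quotient.mk (std F hF) (h y) := by
        rw [hmk, hmk, this]
      exact Quotient.exact h2
    · intro hxy
      have h2 : Quotient.mk (std F hF) (h x) = Quotient.mk (std F hF) (h y) :=
        Quotient.sound hxy
      rw [hmk, hmk] at h2
      exact Quotient.exact (φ.injective h2)
end

section
/- If (A, f) is a partial computable injection structure (A computable, f partial computable and injective on its domain) such that ran(f) is a computable set, then the graph G_f = {(x, y) : f(x)↓ = y} is computable. -/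
/-!
The graph of a partial computable function is always r.e. If `f` is injective, then `y ∉ f x`
holds exactly when either `y ∉ ran f`, which is decidable by hypothesis, or `y ∈ f x'` for
some `x' ≠ x`, which is r.e. as a projection of an r.e. relation. So the complement of the
graph is r.e. as well, and Post's theorem makes the graph computable.
-/

open Nat.Partrec Code Encodable

@[simp]
theorem Part.dom_assert_some {p : Prop} : (Part.assert p fun _ => Part.some ()).Dom ↔ p :=
  exists_prop.trans (and_iff_left trivial)

theorem PFun.notMem_iff_of_injective {α β : Type*} {f : α →. β}
    (hinj : ∀ x y z, z ∈ f x → z ∈ f y → x = y) {x : α} {y : β} :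
    y ∉ f x ↔ (¬∃ x', y ∈ f x') ∨ ∃ x', x' ≠ x ∧ y ∈ f x' := by
  constructor
  · intro hy
    by_cases hran : ∃ x', y ∈ f x'
    · obtain ⟨x', hx'⟩ := hran
      exact .inr ⟨x', fun h => hy (h ▸ hx'), hx'⟩
    · exact .inl hran
  · rintro (hran | ⟨x', hne, hx'⟩) hy
    · exact hran ⟨x, hy⟩
    · exact hne (hinj x' x y hx' hy)

variable {α β σ : Type*} [Primcodable α] [Primcodable β] [Primcodable σ]

theorem REPred.exists_code {p : α → Prop} (hp : REPred p) :
    ∃ c : Code, ∀ a, (eval c (encode a)).Dom ↔ p a := by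
  obtain ⟨c, hc⟩ := Code.exists_code.1 hp
  exact ⟨c, fun a => by simp [hc]⟩

theorem REPred.comp {p : β → Prop} {g : α → β} (hp : REPred p) (hg : Computable g) :
    REPred fun a => p (g a) :=
  Partrec.comp hp hg

theorem REPred.and {p q : α → Prop} (hp : REPred p) (hq : REPred q) :
    REPred fun a => p a ∧ q a :=
  (hp.bind (hq.comp Computable.fst).to₂).of_eq fun a => by
    ext u; simp

theorem REPred.or {p q : α → Prop} (hp : REPred p) (hq : REPred q) :
    REPred fun a => p a ∨ q a := by
  obtain ⟨k, hk, hdom⟩ := Partrec.merge' hp hq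
  refine hk.dom_re.of_eq fun a => ?_
  rw [(hdom a).2]
  simp

theorem REPred.exists {p : α → β → Prop} (hp : REPred fun q : α × β => p q.1 q.2) :
    REPred fun a => ∃ b, p a b := by
  obtain ⟨c, hc⟩ := hp.exists_code
  -- dovetailing: `k` codes a candidate witness `b` together with a step bound for `c` on `(a, b)`
  have hstep : Primrec fun q : α × ℕ =>
      (decode (α := β) q.2.unpair.1).bind fun b => evaln q.2.unpair.2 c (encode (q.1, b)) :=
    Primrec.option_bind ((Primrec.decode.comp (Primrec.fst.comp Primrec.unpair)).comp
      Primrec.snd) (primrec_evaln.comp (((Primrec.snd.comp Primrec.unpair).comp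
        (Primrec.snd.comp Primrec.fst)).pair (Primrec.const c) |>.pair
        (Primrec.encode.comp ((Primrec.fst.comp Primrec.fst).pair Primrec.snd))))
  refine (Partrec.rfindOpt hstep.to_comp.to₂).dom_re.of_eq fun a => ?_
  simp only [Nat.rfindOpt_dom, Option.mem_def, Option.bind_eq_some_iff]
  constructor
  · rintro ⟨k, v, b, -, hv⟩
    exact ⟨b, (hc (a, b)).1 (Part.dom_iff_mem.2 ⟨v, evaln_sound hv⟩)⟩
  · rintro ⟨b, hb⟩
    obtain ⟨v, hv⟩ := Part.dom_iff_mem.1 ((hc (a, b)).2 hb)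
    obtain ⟨s, hs⟩ := evaln_complete.1 hv
    exact ⟨Nat.pair (encode b) s, v, b, by simp, by simpa using hs⟩

theorem Partrec.graph_re [DecidableEq σ] {f : α →. σ} (hf : Partrec f) :
    REPred fun q : α × σ => q.2 ∈ f q.1 := by
  have heq : Partrec₂ fun (q : α × σ) (z : σ) =>
      Part.assert (z = q.2) fun _ => Part.some () :=
    (Primrec.eq.comp Primrec.snd (Primrec.snd.comp Primrec.fst)).computablePred.to_re
  refine ((hf.comp Computable.fst).bind heq).dom_re.of_eq fun q => ?_
  simp [Part.dom_iff_mem]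

theorem graph_computable_of_computable_range (f : ℕ →. ℕ)
    (hf : Nat.Partrec f)
    (hinj : ∀ x y z : ℕ, z ∈ f x → z ∈ f y → x = y)
    (hran : ComputablePred fun y : ℕ => ∃ x, y ∈ f x) :
    ComputablePred fun p : ℕ × ℕ => p.2 ∈ f p.1 := by
  have hgraph : REPred fun p : ℕ × ℕ => p.2 ∈ f p.1 := (Partrec.nat_iff.2 hf).graph_re
  have hne : REPred fun q : (ℕ × ℕ) × ℕ => q.2 ≠ q.1.1 :=
    (Primrec.eq.comp Primrec.snd (Primrec.fst.comp Primrec.fst)).computablePred.not.to_re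
  have hother : REPred fun p : ℕ × ℕ => ∃ x', x' ≠ p.1 ∧ p.2 ∈ f x' :=
    REPred.exists <| hne.and <|
      hgraph.comp (Computable.snd.pair (Computable.snd.comp Computable.fst))
  have hcompl : REPred fun p : ℕ × ℕ => p.2 ∉ f p.1 :=
    ((hran.not.to_re.comp Computable.snd).or hother).of_eq fun _ =>
      (PFun.notMem_iff_of_injective hinj).symm
  exact ComputablePred.computable_iff_re_compl_re'.2 ⟨hgraph, hcompl⟩
end
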